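/- arXiv:2203.01865 — 8 statements merged into one kernel-verified Lean document; each statement's English description precedes it below -/
import Mathlib

section
/- Let n, d ≥ 2, let v_1,...,v_{n+1} be the simplex frame in ℝ^n, and let T = Σ_{k=1}^{n+1} v_k^{⊗d}. A pair (v, μ) with v = Σ_{k=1}^n α_k v_k (where Σ|α_k| > 0) is an eigenpair of T if and only if for each 1 ≤ k ≤ n: μ α_k = (α_k − (1/n)Σ_{j≠k, j≤n} α_j)^{d−1} − (−(1/n)Σ_{j=1}^n α_j)^{d−1}. -/
/-!
Only the Gram matrix of the frame matters: `⟪v i, v j⟫ = 1` for `i = j` and `-1/n` otherwise.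
It forces `∑ v k = 0` (the squared norm of the sum vanishes) and makes `v 1, …, v n` linearly
independent. Substituting `v (n+1) = -∑_{k ≤ n} v k` turns `T·x^{d-1} = ∑_k ⟪x, v k⟫^{d-1} v k`
into `∑_{k ≤ n} (⟪x, v k⟫^{d-1} - ⟪x, v (n+1)⟫^{d-1}) v k`, so the eigen-equation
`T·x^{d-1} = μ x = ∑_{k ≤ n} μ α k v k` amounts to equality of coefficients, and the inner products
`⟪x, v k⟫` are read off the Gram matrix.
-/

open scoped RealInnerProductSpace BigOperators

noncomputable def simplexVec (n : ℕ) (k : Fin (n + 1)) : EuclideanSpace ℝ (Fin n) :=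
  if h : (k : ℕ) < n then
    Real.sqrt (1 + 1 / n) • EuclideanSpace.single ⟨k, h⟩ 1
      - ((Real.sqrt (n + 1) - 1) / (n : ℝ) ^ ((3 : ℝ) / 2)) •
        (WithLp.toLp 2 (fun _ => (1 : ℝ)) : EuclideanSpace ℝ (Fin n))
  else
    -(1 / Real.sqrt n) • (WithLp.toLp 2 (fun _ => (1 : ℝ)) : EuclideanSpace ℝ (Fin n))

open Finset

section EquiangularFamily

variable {ι E : Type*} [Fintype ι] [DecidableEq ι] [NormedAddCommGroup E] [InnerProductSpace ℝ E]
  {w : ι → E} {c : ℝ}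

theorem inner_sum_smul_of_inner_eq_ite (hw : ∀ i j, ⟪w i, w j⟫ = if i = j then 1 else c)
    (β : ι → ℝ) (j : ι) :
    ⟪∑ k, β k • w k, w j⟫ = β j + c * ∑ k ∈ univ.erase j, β k := by
  simp only [sum_inner, real_inner_smul_left, hw]
  rw [← add_sum_erase _ _ (mem_univ j), if_pos rfl, mul_sum]
  congr 1
  · ring
  · exact sum_congr rfl fun k hk => by rw [if_neg (ne_of_mem_erase hk), mul_comm]

theorem sum_eq_zero_of_inner_eq_ite (hw : ∀ i j, ⟪w i, w j⟫ = if i = j then 1 else c)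
    (hc : 1 + (Fintype.card ι - 1) * c = 0) : ∑ i, w i = 0 := by
  have hβ : ∀ j, ⟪∑ k, (1 : ℝ) • w k, w j⟫ = 0 := fun j => by
    rw [inner_sum_smul_of_inner_eq_ite hw, sum_erase_eq_sub (mem_univ j), sum_const,
      card_univ, nsmul_one, ← hc]
    ring
  simp only [one_smul] at hβ
  rw [← inner_self_eq_zero (𝕜 := ℝ), inner_sum]
  exact sum_eq_zero fun j _ => hβ j

theorem linearIndependent_of_inner_eq_ite (hw : ∀ i j, ⟪w i, w j⟫ = if i = j then 1 else c)
    (hc₁ : c ≠ 1) (hc : 1 + (Fintype.card ι - 1) * c ≠ 0) : LinearIndependent ℝ w := by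
  rw [Fintype.linearIndependent_iff]
  intro β hβ
  have hj : ∀ j, (1 - c) * β j = -c * ∑ k, β k := fun j => by
    have := inner_sum_smul_of_inner_eq_ite hw β j
    rw [hβ, inner_zero_left, sum_erase_eq_sub (mem_univ j)] at this
    linear_combination -this
  have hsum : ∑ k, β k = 0 := by
    have := Finset.sum_congr rfl fun j (_ : j ∈ univ) => hj j
    rw [← mul_sum, sum_const, card_univ, nsmul_eq_mul] at this
    have hprod : (1 + (Fintype.card ι - 1) * c) * ∑ k, β k = 0 := by linear_combination this
    exact (mul_eq_zero.mp hprod).resolve_left hc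
  intro j
  have := hj j
  rw [hsum, mul_zero] at this
  exact (mul_eq_zero.mp this).resolve_left (sub_ne_zero.mpr hc₁.symm)

end EquiangularFamily

namespace SimplexVec

variable {n : ℕ}

local notation "𝟙" => (WithLp.toLp 2 (fun _ => (1 : ℝ)) : EuclideanSpace ℝ (Fin n))

noncomputable def scale (n : ℕ) : ℝ := Real.sqrt (1 + 1 / n)

noncomputable def shift (n : ℕ) : ℝ := (Real.sqrt (n + 1) - 1) / (n : ℝ) ^ ((3 : ℝ) / 2)

theorem castSucc_eq (k : Fin n) :
    simplexVec n k.castSucc = scale n • EuclideanSpace.single k 1 - shift n • 𝟙 := by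
  simp [simplexVec, scale, shift]

theorem last_eq : simplexVec n (Fin.last n) = -(1 / Real.sqrt n) • 𝟙 := by
  simp [simplexVec]

theorem scale_sq (n : ℕ) : scale n ^ 2 = 1 + 1 / n :=
  Real.sq_sqrt (by positivity)

theorem scale_sub_mul_shift (hn : 0 < n) : scale n - n * shift n = 1 / Real.sqrt n := by
  have hn' : (0 : ℝ) < n := by exact_mod_cast hn
  have ha : Real.sqrt n ^ 2 = n := Real.sq_sqrt hn'.le
  rw [scale, shift, show (1 : ℝ) + 1 / n = (n + 1) / n by field_simp, Real.sqrt_div (by positivity),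
    show ((3 : ℝ) / 2) = 1 + 1 / 2 by norm_num, Real.rpow_add hn', Real.rpow_one,
    ← Real.sqrt_eq_rpow, ← ha]
  field_simp
  ring

theorem inner_single_ones (i : Fin n) : ⟪EuclideanSpace.single i (1 : ℝ), 𝟙⟫ = 1 := by
  simp [EuclideanSpace.inner_single_left]

theorem inner_ones_single (i : Fin n) : ⟪𝟙, EuclideanSpace.single i (1 : ℝ)⟫ = 1 := by
  rw [real_inner_comm, inner_single_ones]

theorem inner_ones_ones : ⟪𝟙, 𝟙⟫ = n := by
  rw [PiLp.inner_apply]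
  simp

theorem inner_castSucc_last (hn : 0 < n) (i : Fin n) :
    ⟪simplexVec n i.castSucc, simplexVec n (Fin.last n)⟫ = -1 / n := by
  have hn' : (0 : ℝ) < n := by exact_mod_cast hn
  rw [castSucc_eq, last_eq, real_inner_smul_right, inner_sub_left, real_inner_smul_left,
    real_inner_smul_left, inner_single_ones, inner_ones_ones,
    show scale n * 1 - shift n * n = scale n - n * shift n by ring, scale_sub_mul_shift hn]
  field_simp
  rw [Real.sq_sqrt hn'.le]

theorem inner_castSucc_castSucc (hn : 0 < n) (i j : Fin n) :
    ⟪simplexVec n i.castSucc, simplexVec n j.castSucc⟫ = if i = j then 1 else -1 / (n : ℝ) := by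
  have hn' : (0 : ℝ) < n := by exact_mod_cast hn
  have key : n * shift n = scale n - 1 / Real.sqrt n := by linarith [scale_sub_mul_shift hn]
  have hcross : n * shift n ^ 2 - 2 * scale n * shift n = -1 / n := by
    have ha : (1 / Real.sqrt n) ^ 2 = 1 / n := by rw [div_pow, Real.sq_sqrt hn'.le, one_pow]
    rw [eq_div_iff hn'.ne']
    -- `n (n c² - 2 s c) = (n c)² - 2 s (n c)` with `n c = s - 1/√n` equals `1/n - s² = -1`
    linear_combination (n * shift n - scale n - 1 / Real.sqrt n) * key - scale_sq n + ha
  simp only [castSucc_eq, inner_sub_left, inner_sub_right, real_inner_smul_left,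
    real_inner_smul_right, inner_single_ones, inner_ones_single, inner_ones_ones,
    orthonormal_iff_ite.mp EuclideanSpace.orthonormal_single i j]
  split_ifs
  · linear_combination scale_sq n + hcross
  · linear_combination hcross

theorem inner_last_last (hn : 0 < n) :
    ⟪simplexVec n (Fin.last n), simplexVec n (Fin.last n)⟫ = 1 := by
  have hn' : (0 : ℝ) < n := by exact_mod_cast hn
  rw [last_eq, real_inner_smul_left, real_inner_smul_right, inner_ones_ones]
  field_simp
  rw [Real.sq_sqrt hn'.le]

theorem inner_simplexVec (hn : 0 < n) (i j : Fin (n + 1)) :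
    ⟪simplexVec n i, simplexVec n j⟫ = if i = j then 1 else -1 / (n : ℝ) := by
  induction i using Fin.lastCases with
  | last => induction j using Fin.lastCases with
    | last => rw [if_pos rfl, inner_last_last hn]
    | cast j => rw [if_neg (Fin.castSucc_ne_last j).symm, real_inner_comm, inner_castSucc_last hn]
  | cast i => induction j using Fin.lastCases with
    | last => rw [if_neg (Fin.castSucc_ne_last i), inner_castSucc_last hn]
    | cast j => simp only [inner_castSucc_castSucc hn, Fin.castSucc_inj]

end SimplexVec

theorem eigen_equation_iff_of_simplex_gram {E : Type*} [NormedAddCommGroup E]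
    [InnerProductSpace ℝ E] {n : ℕ} {v : Fin (n + 1) → E} (hn : 0 < n)
    (hv : ∀ i j, ⟪v i, v j⟫ = if i = j then 1 else -1 / (n : ℝ)) (d : ℕ) (α : Fin n → ℝ) (μ : ℝ) :
    (∑ k, ⟪∑ j, α j • v j.castSucc, v k⟫ ^ (d - 1) • v k = μ • ∑ j, α j • v j.castSucc) ↔
      ∀ k : Fin n,
        μ * α k =
          (α k - (1 / (n : ℝ)) * ∑ j ∈ univ.erase k, α j) ^ (d - 1) -
            (-((1 / (n : ℝ)) * ∑ j, α j)) ^ (d - 1) := by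
  have hn' : (0 : ℝ) < n := by exact_mod_cast hn
  set w : Fin n → E := fun k => v k.castSucc
  have hw : ∀ i j, ⟪w i, w j⟫ = if i = j then 1 else -1 / (n : ℝ) := fun i j => by
    simp only [w, hv, Fin.castSucc_inj]
  have hlast : v (Fin.last n) = -∑ k, w k := by
    have := sum_eq_zero_of_inner_eq_ite hv (by rw [Fintype.card_fin]; push_cast; field_simp; ring)
    rw [Fin.sum_univ_castSucc] at this
    exact eq_neg_of_add_eq_zero_right this
  set x := ∑ j, α j • w j
  have hxw : ∀ k, ⟪x, w k⟫ = α k - (1 / (n : ℝ)) * ∑ j ∈ univ.erase k, α j := fun k => by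
    rw [inner_sum_smul_of_inner_eq_ite hw]; ring
  have hxlast : ⟪x, v (Fin.last n)⟫ = -((1 / (n : ℝ)) * ∑ j, α j) := by
    simp only [x, w, sum_inner, real_inner_smul_left, hv, Fin.castSucc_ne_last, if_false,
      ← sum_mul]
    ring
  rw [Fin.sum_univ_castSucc, hxlast, hlast]
  change ∑ k, ⟪x, w k⟫ ^ (d - 1) • w k + _ = _ ↔ _
  simp only [hxw]
  rw [smul_neg, smul_sum, smul_sum, ← sub_eq_add_neg, ← sum_sub_distrib]
  simp only [← sub_smul, smul_smul]
  have hc₁ : -1 / (n : ℝ) ≠ 1 := by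
    rw [Ne, div_eq_one_iff_eq hn'.ne']
    linarith
  have hc : 1 + (Fintype.card (Fin n) - 1) * (-1 / (n : ℝ)) ≠ 0 := by
    rw [Fintype.card_fin, show 1 + ((n : ℝ) - 1) * (-1 / n) = 1 / n by field_simp; ring]
    positivity
  have hli := Fintype.linearIndependent_iffₛ.mp (linearIndependent_of_inner_eq_ite hw hc₁ hc)
  exact ⟨fun h k => (hli _ _ h k).symm, fun h => sum_congr rfl fun k _ => by rw [h k]⟩

theorem stmt_3_general (n d : ℕ) (hn : 2 ≤ n)
    (α : Fin n → ℝ) (μ : ℝ)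
    (v : EuclideanSpace ℝ (Fin n))
    (hv : v = ∑ k : Fin n, α k • simplexVec n k.castSucc) :
    (∑ k : Fin (n + 1), ⟪v, simplexVec n k⟫ ^ (d - 1) • simplexVec n k = μ • v) ↔
      ∀ k : Fin n,
        μ * α k =
          (α k - (1 / (n : ℝ)) * ∑ j ∈ Finset.univ.erase k, α j) ^ (d - 1) -
            (-((1 / (n : ℝ)) * ∑ j, α j)) ^ (d - 1) := by
  subst hv
  exact eigen_equation_iff_of_simplex_gram (by omega) (SimplexVec.inner_simplexVec (by omega)) d α μ

theorem stmt_3 (n d : ℕ) (hn : 2 ≤ n) (hd : 2 ≤ d)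
    (α : Fin n → ℝ) (hα : 0 < ∑ k, |α k|) (μ : ℝ)
    (v : EuclideanSpace ℝ (Fin n))
    (hv : v = ∑ k : Fin n, α k • simplexVec n k.castSucc) :
    (∑ k : Fin (n + 1), ⟪v, simplexVec n k⟫ ^ (d - 1) • simplexVec n k = μ • v) ↔
      ∀ k : Fin n,
        μ * α k =
          (α k - (1 / (n : ℝ)) * ∑ j ∈ Finset.univ.erase k, α j) ^ (d - 1) -
            (-((1 / (n : ℝ)) * ∑ j, α j)) ^ (d - 1) :=
  stmt_3_general n d hn α μ v hv
end

section
/- Let n ≥ 2, d ≥ 4 even, and g(s) = ((n+1)s − 1)^{d−1} + 1. Then there exists s* ∈ [1/n, 2/(n+1)) such that the polynomial p(s) = g(s)/s is strictly decreasing on [0, s*] and strictly increasing on [s*, ∞); moreover s* = 1/n if and only if (n,d) = (2,4). -/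
/-!
With `N = n + 1` and `m = d - 2` (even), `g(s)/s` is the polynomial `N ∑_{k ≤ m} (1 - N s)^k`,
and `s² p'(s) = s g'(s) - g(s) = φ(s) := (N s - 1)^m (m N s + 1) - 1`. Since
`φ'(s) = m (m + 1) N² s (N s - 1)^(m - 1)` with `m - 1` odd, `φ` decreases from `φ(0) = 0` on
`[0, 1/N]` and increases on `[1/N, ∞)`, passing from `φ(1/N) = -1` to `φ(2/N) = 2m`. Its unique
positive root `s*` lies in `(1/N, 2/N)`, and `p` decreases before it and increases after it.
Finally `s*` compares with `1/n ≥ 1/N` as `0` does with `φ(1/n) = (m (n + 1) + n) / n^(m + 1) - 1`,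
and `m (n + 1) + n ≤ n^(m + 1)` with equality only for `n = m = 2`.
-/

open Set

theorem succ_mul_add_lt_pow {n m : ℕ} (hn : 2 ≤ n) (hm : 3 ≤ m) :
    m * (n + 1) + n < n ^ (m + 1) := by
  have h4n : 4 * n ≤ n ^ 3 := by
    rw [pow_succ, sq]; exact Nat.mul_le_mul_right n (Nat.mul_le_mul hn hn)
  induction m, hm using Nat.le_induction with
  | base => rw [pow_succ]; nlinarith
  | succ m hm ih =>
    have : n ^ 3 ≤ n ^ (m + 1) := Nat.pow_le_pow_right (by omega) (by omega)
    rw [pow_succ]; nlinarith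

theorem pow_three_eq_of_two_le {n : ℕ} (hn : 2 ≤ n) :
    n ^ 3 = 3 * n + 2 + (n - 2) * (n + 1) ^ 2 := by
  obtain ⟨k, rfl⟩ := Nat.exists_eq_add_of_le hn
  rw [Nat.add_sub_cancel_left]
  ring

theorem mul_succ_add_le_pow {n m : ℕ} (hn : 2 ≤ n) (hm : 2 ≤ m) :
    m * (n + 1) + n ≤ n ^ (m + 1) := by
  rcases hm.eq_or_lt with rfl | hm
  · rw [pow_three_eq_of_two_le hn]; omega
  · exact (succ_mul_add_lt_pow hn hm).le

theorem mul_succ_add_eq_pow_iff {n m : ℕ} (hn : 2 ≤ n) (hm : 2 ≤ m) :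
    m * (n + 1) + n = n ^ (m + 1) ↔ n = 2 ∧ m = 2 := by
  constructor
  · intro h
    rcases hm.eq_or_lt with rfl | hm
    · rw [pow_three_eq_of_two_le hn] at h
      have : (n - 2) * (n + 1) ^ 2 = 0 := by omega
      simp only [mul_eq_zero, pow_eq_zero_iff', Nat.add_eq_zero_iff] at this
      omega
    · exact absurd h (succ_mul_add_lt_pow hn hm).ne
  · rintro ⟨rfl, rfl⟩
    norm_num

theorem eq_of_eq_mul_div_self_of_eq_deriv {p q : ℝ → ℝ} (hq : DifferentiableAt ℝ q 0)
    (hp0 : p 0 = deriv (fun s => s * q s) 0) (hp : ∀ s, s ≠ 0 → p s = s * q s / s) : p = q := by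
  funext s
  rcases eq_or_ne s 0 with rfl | hs
  · rw [hp0, ((hasDerivAt_id' 0).fun_mul hq.hasDerivAt).deriv]
    simp
  · rw [hp s hs, mul_div_cancel_left₀ _ hs]

/-- `p` of the statement, written with `N = n + 1` and `m = d - 2`. -/
noncomputable def powQuot (N : ℝ) (m : ℕ) (s : ℝ) : ℝ :=
  N * ∑ k ∈ Finset.range (m + 1), (1 - N * s) ^ k

noncomputable def powQuotNumer (N : ℝ) (m : ℕ) (s : ℝ) : ℝ :=
  (N * s - 1) ^ m * (m * N * s + 1) - 1

variable {N : ℝ} {m : ℕ}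

theorem differentiable_powQuot (N : ℝ) (m : ℕ) : Differentiable ℝ (powQuot N m) := by
  unfold powQuot; fun_prop

theorem mul_powQuot (hm : Even m) (s : ℝ) :
    s * powQuot N m s = (N * s - 1) ^ (m + 1) + 1 := by
  have : (N * s - 1) ^ (m + 1) = -(1 - N * s) ^ (m + 1) := by
    rw [← hm.add_one.neg_pow, neg_sub]
  rw [this, powQuot]
  linear_combination (-1 : ℝ) * geom_sum_mul (1 - N * s) (m + 1)

theorem sq_mul_deriv_powQuot (hm : Even m) (s : ℝ) :
    s ^ 2 * deriv (powQuot N m) s = powQuotNumer N m s := by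
  have hprod : HasDerivAt (fun s => s * powQuot N m s)
      (1 * powQuot N m s + s * deriv (powQuot N m) s) s :=
    (hasDerivAt_id s).mul (differentiable_powQuot N m s).hasDerivAt
  have hpow : HasDerivAt (fun s => (N * s - 1) ^ (m + 1) + 1)
      ((m + 1 : ℕ) * (N * s - 1) ^ m * (N * 1)) s := by
    simpa using ((((hasDerivAt_id s).const_mul N).sub_const 1).pow (m + 1)).add_const 1
  rw [funext (mul_powQuot hm)] at hprod
  have := hprod.unique hpow
  push_cast at this
  rw [powQuotNumer]
  linear_combination s * this - mul_powQuot hm s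

theorem continuous_powQuotNumer (N : ℝ) (m : ℕ) : Continuous (powQuotNumer N m) := by
  unfold powQuotNumer; fun_prop

theorem hasDerivAt_powQuotNumer (N : ℝ) (m : ℕ) (s : ℝ) :
    HasDerivAt (powQuotNumer N m) (m * (m + 1) * N ^ 2 * s * (N * s - 1) ^ (m - 1)) s := by
  have hlin : HasDerivAt (fun s => N * s - 1) N s := by
    simpa using ((hasDerivAt_id s).const_mul N).sub_const 1
  have hlin' : HasDerivAt (fun s => (m : ℝ) * N * s + 1) (m * N) s := by
    simpa using ((hasDerivAt_id s).const_mul ((m : ℝ) * N)).add_const 1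
  refine (((hlin.fun_pow m).mul hlin').sub_const 1).congr_deriv ?_
  rcases m with _ | m
  · simp
  · rw [Nat.add_sub_cancel, pow_succ]
    push_cast
    ring

theorem powQuotNumer_zero (hm : Even m) : powQuotNumer N m 0 = 0 := by
  simp [powQuotNumer, hm.neg_one_pow]

theorem powQuotNumer_inv (hN : N ≠ 0) (hm : m ≠ 0) : powQuotNumer N m (1 / N) = -1 := by
  simp [powQuotNumer, hN, hm]

theorem powQuotNumer_two_div (hN : N ≠ 0) : powQuotNumer N m (2 / N) = 2 * m := by
  rw [powQuotNumer, show N * (2 / N) - 1 = 1 by field_simp; norm_num]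
  field_simp
  ring

theorem powQuotNumer_inv_natCast {n : ℕ} (hn : n ≠ 0) (m : ℕ) :
    powQuotNumer (n + 1) m (1 / n) = (m * (n + 1) + n : ℕ) / (n : ℝ) ^ (m + 1) - 1 := by
  rw [powQuotNumer, show ((n : ℝ) + 1) * (1 / n) - 1 = 1 / n by field_simp; ring, div_pow,
    one_pow]
  push_cast
  field_simp
  ring

theorem powQuotNumer_strictAntiOn (hN : 0 < N) (hm : Even m) (hm0 : m ≠ 0) :
    StrictAntiOn (powQuotNumer N m) (Icc 0 (1 / N)) := by
  refine strictAntiOn_of_deriv_neg (convex_Icc _ _)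
    (continuous_powQuotNumer N m).continuousOn fun s hs => ?_
  rw [interior_Icc] at hs
  obtain ⟨hs0, hs⟩ := hs
  rw [(hasDerivAt_powQuotNumer N m s).deriv]
  have hneg : N * s - 1 < 0 := by rw [lt_div_iff₀ hN] at hs; linarith
  have hodd : Odd (m - 1) := by
    obtain ⟨k, rfl⟩ := hm; exact ⟨k - 1, by omega⟩
  have : (0 : ℝ) < m := by positivity
  exact mul_neg_of_pos_of_neg (by positivity) (hodd.pow_neg hneg)

theorem powQuotNumer_strictMonoOn (hN : 0 < N) (hm0 : m ≠ 0) :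
    StrictMonoOn (powQuotNumer N m) (Ici (1 / N)) := by
  refine strictMonoOn_of_deriv_pos (convex_Ici _)
    (continuous_powQuotNumer N m).continuousOn fun s hs => ?_
  rw [interior_Ici, mem_Ioi] at hs
  rw [(hasDerivAt_powQuotNumer N m s).deriv]
  have hpos : 0 < N * s - 1 := by rw [div_lt_iff₀ hN] at hs; linarith
  have : (0 : ℝ) < m := by positivity
  have : 0 < s := lt_trans (by positivity) hs
  positivity

theorem exists_powQuotNumer_eq_zero (hN : 0 < N) (hm0 : m ≠ 0) :
    ∃ a ∈ Ioo (1 / N) (2 / N), powQuotNumer N m a = 0 := by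
  have hle : 1 / N ≤ 2 / N := by gcongr; norm_num
  refine intermediate_value_Ioo hle (continuous_powQuotNumer N m).continuousOn ?_
  rw [powQuotNumer_inv hN.ne' hm0, powQuotNumer_two_div hN.ne']
  exact ⟨by norm_num, by positivity⟩

theorem powQuotNumer_neg_of_lt {a s : ℝ} (hN : 0 < N) (hm : Even m) (hm0 : m ≠ 0)
    (ha : 1 / N ≤ a) (hroot : powQuotNumer N m a = 0) (hs : 0 < s) (hsa : s < a) :
    powQuotNumer N m s < 0 := by
  rcases le_or_gt s (1 / N) with hsN | hsN
  · rw [← powQuotNumer_zero (N := N) hm]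
    exact powQuotNumer_strictAntiOn hN hm hm0 ⟨le_rfl, by positivity⟩ ⟨hs.le, hsN⟩ hs
  · rw [← hroot]
    exact powQuotNumer_strictMonoOn hN hm0 (mem_Ici.2 hsN.le) ha hsa

theorem powQuotNumer_pos_of_gt {a s : ℝ} (hN : 0 < N) (hm0 : m ≠ 0)
    (ha : 1 / N ≤ a) (hroot : powQuotNumer N m a = 0) (hsa : a < s) :
    0 < powQuotNumer N m s := by
  rw [← hroot]
  exact powQuotNumer_strictMonoOn hN hm0 ha (mem_Ici.2 (ha.trans hsa.le)) hsa

theorem powQuot_strictAntiOn {a : ℝ} (hN : 0 < N) (hm : Even m) (hm0 : m ≠ 0)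
    (ha : 1 / N ≤ a) (hroot : powQuotNumer N m a = 0) :
    StrictAntiOn (powQuot N m) (Icc 0 a) := by
  refine strictAntiOn_of_deriv_neg (convex_Icc _ _)
    (differentiable_powQuot N m).continuous.continuousOn fun s hs => ?_
  rw [interior_Icc] at hs
  have := sq_mul_deriv_powQuot (N := N) hm s ▸
    powQuotNumer_neg_of_lt hN hm hm0 ha hroot hs.1 hs.2
  exact neg_of_mul_neg_right this (sq_nonneg s)

theorem powQuot_strictMonoOn {a : ℝ} (hN : 0 < N) (hm : Even m) (hm0 : m ≠ 0)
    (ha : 1 / N ≤ a) (hroot : powQuotNumer N m a = 0) :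
    StrictMonoOn (powQuot N m) (Ici a) := by
  refine strictMonoOn_of_deriv_pos (convex_Ici _)
    (differentiable_powQuot N m).continuous.continuousOn fun s hs => ?_
  rw [interior_Ici] at hs
  have := sq_mul_deriv_powQuot (N := N) hm s ▸ powQuotNumer_pos_of_gt hN hm0 ha hroot hs
  exact pos_of_mul_pos_right this (sq_nonneg s)

theorem stmt_8 (n d : ℕ) (hn : 2 ≤ n) (hd : 4 ≤ d) (hdeven : Even d)
    (g p : ℝ → ℝ)
    (hg : ∀ s, g s = (((n : ℝ) + 1) * s - 1) ^ (d - 1) + 1)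
    (hp0 : p 0 = deriv g 0)
    (hp : ∀ s : ℝ, s ≠ 0 → p s = g s / s) :
    ∃ sstar : ℝ, sstar ∈ Set.Ico (1 / (n : ℝ)) (2 / ((n : ℝ) + 1)) ∧
      StrictAntiOn p (Set.Icc 0 sstar) ∧ StrictMonoOn p (Set.Ici sstar) ∧
      (sstar = 1 / (n : ℝ) ↔ n = 2 ∧ d = 4) := by
  obtain ⟨m, rfl⟩ : ∃ m, d = m + 2 := ⟨d - 2, by omega⟩
  have hm : Even m := by simpa [Nat.even_add] using hdeven
  have hm0 : m ≠ 0 := by omega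
  have hN : (0 : ℝ) < n + 1 := by positivity
  obtain rfl : g = fun s => s * powQuot (n + 1) m s := funext fun s => by
    rw [hg, mul_powQuot hm]; rfl
  obtain rfl := eq_of_eq_mul_div_self_of_eq_deriv (differentiable_powQuot _ m 0) hp0 hp
  obtain ⟨a, ⟨haN, ha2⟩, hroot⟩ := exists_powQuotNumer_eq_zero hN hm0
  have hnN : 1 / (n : ℝ) ∈ Ici (1 / ((n : ℝ) + 1)) := by
    rw [mem_Ici]; gcongr; linarith
  have hmono := powQuotNumer_strictMonoOn hN hm0
  have hnpow : (0 : ℝ) < (n : ℝ) ^ (m + 1) := by positivity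
  have hval := powQuotNumer_inv_natCast (n := n) (by omega) m
  refine ⟨a, ⟨?_, ha2⟩, powQuot_strictAntiOn hN hm hm0 haN.le hroot,
    powQuot_strictMonoOn hN hm hm0 haN.le hroot, ?_⟩
  · rw [← hmono.le_iff_le hnN haN.le, hroot, hval, sub_nonpos, div_le_one hnpow]
    exact_mod_cast mul_succ_add_le_pow hn (by omega)
  · rw [show m + 2 = 4 ↔ m = 2 by omega, ← mul_succ_add_eq_pow_iff hn (by omega),
      ← hmono.injOn.eq_iff haN.le hnN, hroot, eq_comm, hval, sub_eq_zero,
      div_eq_one_iff_eq hnpow.ne']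
    exact_mod_cast Iff.rfl
end

section
/- Let n ≥ 2 and d ≥ 3 odd. Then s ∈ Δ_{n−1} satisfies h(s) = 0 (where h(s)_k = s_k·(g(1−Σ_{j<n} s_j) + Σ_{j<n} g(s_j)) − g(s_k)) if and only if, with s_n := 1 − Σ_{k=1}^{n−1} s_k, there is a nonempty K ⊆ {1,...,n} with s_k = 1/|K| for k ∈ K and s_k = 0 for k ∉ K. -/
/-! Extend `s` to the point `t = (s, 1 - ∑ s)` of the standard simplex in `ℝⁿ` and put
`T = ∑ₖ g (tₖ)`. Then `h s = 0` says `tₖ T = g (tₖ)` for the first `n - 1` coordinates, and summing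
these, using `∑ t = 1`, gives the same equation for the last one. As `g` is strictly convex with
`g 0 = 0`, its secant slope `g x / x` is strictly increasing on `(0, ∞)`, so the positive
coordinates, which all satisfy `g x / x = T`, coincide; summing to `1`, they equal `1 / |K|` on
their support `K`. Conversely, every such point solves the equations because `g 0 = 0`. -/

open Finset

namespace Fin

lemma univ_eq_insert_map_castLEEmb {n : ℕ} (hn : n - 1 < n) :
    (univ : Finset (Fin n)) = insert ⟨n - 1, hn⟩ (univ.map (castLEEmb (Nat.sub_le n 1))) := by
  ext i
  simp only [mem_univ, mem_insert, mem_map, coe_castLEEmb, true_and, true_iff, Fin.ext_iff,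
    val_castLE]
  by_cases hi : (i : ℕ) = n - 1
  · exact .inl hi
  · exact .inr ⟨⟨i, by omega⟩, rfl⟩

lemma last_notMem_map_castLEEmb {n : ℕ} (hn : n - 1 < n) :
    (⟨n - 1, hn⟩ : Fin n) ∉ univ.map (castLEEmb (Nat.sub_le n 1)) := by
  simp only [mem_map, mem_univ, true_and, coe_castLEEmb, not_exists, Fin.ext_iff, val_castLE]
  exact fun j => j.isLt.ne

lemma forall_iff_castLE_and_last {n : ℕ} (hn : n - 1 < n) {P : Fin n → Prop} :
    (∀ i, P i) ↔ (∀ j : Fin (n - 1), P (castLE (Nat.sub_le n 1) j)) ∧ P ⟨n - 1, hn⟩ := by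
  have := forall_mem_insert (p := P) ⟨n - 1, hn⟩ (univ.map (castLEEmb (Nat.sub_le n 1)))
  simp only [← univ_eq_insert_map_castLEEmb hn, mem_univ, forall_const, forall_mem_map] at this
  simpa [and_comm] using this

lemma sum_eq_last_add_sum_castLE {M : Type*} [AddCommMonoid M] {n : ℕ} (hn : n - 1 < n)
    (f : Fin n → M) :
    ∑ i, f i = f ⟨n - 1, hn⟩ + ∑ j : Fin (n - 1), f (castLE (Nat.sub_le n 1) j) := by
  rw [univ_eq_insert_map_castLEEmb hn, sum_insert (last_notMem_map_castLEEmb hn), sum_map]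
  rfl

end Fin

lemma StrictConvexOn.comp_mul_add {f : ℝ → ℝ} (hf : StrictConvexOn ℝ Set.univ f) {c : ℝ}
    (hc : 0 < c) (b : ℝ) : StrictConvexOn ℝ Set.univ fun x => f (c * x + b) := by
  refine ⟨convex_univ, fun x _ y _ hxy p q hp hq hpq => ?_⟩
  have hne : c * x + b ≠ c * y + b := by
    simpa only [ne_eq, add_left_inj, mul_right_inj' hc.ne'] using hxy
  calc f (c * (p • x + q • y) + b) = f (p • (c * x + b) + q • (c * y + b)) := by
        congr 1; simp only [smul_eq_mul]; linear_combination b * hpq.symm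
    _ < p • f (c * x + b) + q • f (c * y + b) := hf.2 trivial trivial hne hp hq hpq

lemma StrictConvexOn.strictMonoOn_div_self {f : ℝ → ℝ} (hf : StrictConvexOn ℝ (Set.Ici 0) f)
    (h0 : f 0 = 0) : StrictMonoOn (fun x => f x / x) (Set.Ioi 0) := by
  intro x hx y hy hxy
  simpa only [h0, sub_zero] using
    hf.secant_strict_mono Set.self_mem_Ici (Set.mem_Ici_of_Ioi hx) (Set.mem_Ici_of_Ioi hy)
      (ne_of_gt hx) (ne_of_gt hy) hxy

section

variable {ι : Type*} [Fintype ι] [DecidableEq ι] {φ : ℝ → ℝ} {t : ι → ℝ}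

lemma forall_mul_sum_eq_iff_forall_ne (ht : ∑ i, t i = 1) (a : ι) :
    (∀ i, t i * ∑ j, φ (t j) = φ (t i)) ↔ ∀ i ≠ a, t i * ∑ j, φ (t j) = φ (t i) := by
  refine ⟨fun h i _ => h i, fun h i => ?_⟩
  obtain rfl | hi := eq_or_ne i a
  · set T := ∑ j, φ (t j)
    have hrest : (∑ j ∈ univ.erase i, t j) * T = ∑ j ∈ univ.erase i, φ (t j) := by
      rw [sum_mul]
      exact sum_congr rfl fun j hj => h j (ne_of_mem_erase hj)
    have ht' := add_sum_erase univ t (mem_univ i)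
    have hT := add_sum_erase univ (fun j => φ (t j)) (mem_univ i)
    rw [ht] at ht'
    linear_combination T * ht' - hrest - hT
  · exact h i hi

lemma exists_eq_ite_inv_card_of_forall_mul_sum_eq (hφ : Set.InjOn (fun x => φ x / x) (Set.Ioi 0))
    (ht0 : ∀ i, 0 ≤ t i) (ht : ∑ i, t i = 1) (h : ∀ i, t i * ∑ j, φ (t j) = φ (t i)) :
    ∃ K : Finset ι, K.Nonempty ∧ ∀ i, t i = if i ∈ K then 1 / (#K : ℝ) else 0 := by
  set K := univ.filter fun i => 0 < t i
  have hmem : ∀ i, i ∈ K ↔ 0 < t i := by simp [K]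
  have hsumK : ∑ i ∈ K, t i = 1 :=
    ht ▸ sum_filter_of_ne fun i _ hi => (ht0 i).lt_of_ne' hi
  obtain ⟨i₀, hi₀⟩ : K.Nonempty := by
    by_contra hK
    rw [not_nonempty_iff_eq_empty.mp hK, sum_empty] at hsumK
    exact zero_ne_one hsumK
  -- Every positive coordinate `x` satisfies `φ x / x = ∑ j, φ (t j)`.
  have hconst : ∀ i ∈ K, t i = t i₀ := fun i hi =>
    hφ ((hmem i).mp hi) ((hmem i₀).mp hi₀) <| by
      simp only [← h i, ← h i₀, mul_div_cancel_left₀ _ ((hmem _).mp hi).ne',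
        mul_div_cancel_left₀ _ ((hmem _).mp hi₀).ne']
  have hcard : (#K : ℝ) * t i₀ = 1 := by
    rw [← hsumK, sum_congr rfl hconst, sum_const, nsmul_eq_mul]
  refine ⟨K, ⟨i₀, hi₀⟩, fun i => ?_⟩
  split_ifs with hi
  · rw [hconst i hi, eq_one_div_of_mul_eq_one_right hcard]
  · exact le_antisymm (not_lt.mp ((hmem i).not.mp hi)) (ht0 i)

lemma forall_mul_sum_eq_of_eq_ite (hφ0 : φ 0 = 0) {K : Finset ι}
    (hK : ∀ i, t i = if i ∈ K then 1 / (#K : ℝ) else 0) :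
    ∀ i, t i * ∑ j, φ (t j) = φ (t i) := by
  have hsum : ∑ j, φ (t j) = #K * φ (1 / #K) := by
    simp only [hK, apply_ite φ, hφ0, sum_ite_mem, univ_inter, sum_const, nsmul_eq_mul]
  intro i
  rw [hsum, hK i]
  split_ifs with hi
  · have : (#K : ℝ) ≠ 0 := Nat.cast_ne_zero.mpr (card_ne_zero_of_mem hi)
    field_simp
  · rw [zero_mul, hφ0]

lemma forall_mul_sum_eq_iff (hφ : Set.InjOn (fun x => φ x / x) (Set.Ioi 0)) (hφ0 : φ 0 = 0)
    (ht0 : ∀ i, 0 ≤ t i) (ht : ∑ i, t i = 1) :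
    (∀ i, t i * ∑ j, φ (t j) = φ (t i)) ↔
      ∃ K : Finset ι, K.Nonempty ∧ ∀ i, t i = if i ∈ K then 1 / (#K : ℝ) else 0 :=
  ⟨exists_eq_ite_inv_card_of_forall_mul_sum_eq hφ ht0 ht,
    fun ⟨_, _, hK⟩ => forall_mul_sum_eq_of_eq_ite hφ0 hK⟩

end

def extendCompl {n : ℕ} (s : Fin (n - 1) → ℝ) (i : Fin n) : ℝ :=
  if hi : (i : ℕ) < n - 1 then s ⟨i, hi⟩ else 1 - ∑ j, s j

section

variable {n : ℕ} (s : Fin (n - 1) → ℝ)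

@[simp]
lemma extendCompl_castLE (j : Fin (n - 1)) :
    extendCompl s (Fin.castLE (Nat.sub_le n 1) j) = s j := by
  simp [extendCompl]

@[simp]
lemma extendCompl_last (hn : n - 1 < n) : extendCompl s ⟨n - 1, hn⟩ = 1 - ∑ j, s j := by
  simp [extendCompl]

lemma sum_comp_extendCompl (hn : n - 1 < n) (f : ℝ → ℝ) :
    ∑ i, f (extendCompl s i) = f (1 - ∑ j, s j) + ∑ j, f (s j) := by
  simp [Fin.sum_eq_last_add_sum_castLE hn]

lemma sum_extendCompl (hn : n - 1 < n) : ∑ i, extendCompl s i = 1 := by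
  simpa using sum_comp_extendCompl s hn id

lemma extendCompl_nonneg {s : Fin (n - 1) → ℝ} (hs0 : ∀ j, 0 ≤ s j) (hs1 : ∑ j, s j ≤ 1)
    (i : Fin n) : 0 ≤ extendCompl s i := by
  unfold extendCompl
  split_ifs
  exacts [hs0 _, sub_nonneg.mpr hs1]

end

theorem stmt_12 (n d : ℕ) (hn : 2 ≤ n) (hd : 3 ≤ d) (hdodd : Odd d)
    (g : ℝ → ℝ)
    (hg : ∀ s, g s = (((n : ℝ) + 1) * s - 1) ^ (d - 1) - 1)
    (h : (Fin (n - 1) → ℝ) → Fin (n - 1) → ℝ)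
    (hh : ∀ s k, h s k = s k * (g (1 - ∑ j, s j) + ∑ j, g (s j)) - g (s k))
    (s : Fin (n - 1) → ℝ) (hs0 : ∀ k, 0 ≤ s k) (hs1 : ∑ j, s j ≤ 1) :
    h s = 0 ↔
      ∃ K : Finset (Fin n), K.Nonempty ∧
        (∀ j : Fin (n - 1), s j =
          if Fin.castLE (Nat.sub_le n 1) j ∈ K then 1 / (K.card : ℝ) else 0) ∧
        ((1 - ∑ j, s j) =
          if (⟨n - 1, by omega⟩ : Fin n) ∈ K then 1 / (K.card : ℝ) else 0) := by
  have hn' : n - 1 < n := by omega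
  have he : Even (d - 1) := Nat.Odd.sub_odd hdodd odd_one
  have hg0 : g 0 = 0 := by rw [hg, mul_zero, zero_sub, he.neg_one_pow, sub_self]
  have hconv : StrictConvexOn ℝ (Set.Ici 0) g := by
    have := ((he.strictConvexOn_pow (by omega)).comp_mul_add (c := (n : ℝ) + 1) (by positivity)
      (-1)).add_const (-1)
    refine (this.subset (Set.subset_univ _) (convex_Ici 0)).congr fun x _ => ?_
    simp only [Pi.add_apply, hg, sub_eq_add_neg]
  set t := extendCompl s
  have hT := sum_comp_extendCompl s hn' g
  calc h s = 0 ↔ ∀ j, s j * (g (1 - ∑ j, s j) + ∑ j, g (s j)) = g (s j) := by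
        simp only [funext_iff, hh, Pi.zero_apply, sub_eq_zero]
    _ ↔ ∀ i, i ≠ ⟨n - 1, hn'⟩ → t i * ∑ j, g (t j) = g (t i) := by
        rw [Fin.forall_iff_castLE_and_last hn']
        simp [t, hT, Fin.ext_iff, fun j : Fin (n - 1) => j.isLt.ne]
    _ ↔ ∀ i, t i * ∑ j, g (t j) = g (t i) :=
        (forall_mul_sum_eq_iff_forall_ne (sum_extendCompl s hn') _).symm
    _ ↔ ∃ K : Finset (Fin n), K.Nonempty ∧ ∀ i, t i = if i ∈ K then 1 / (K.card : ℝ) else 0 :=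
        forall_mul_sum_eq_iff (hconv.strictMonoOn_div_self hg0).injOn hg0
          (extendCompl_nonneg hs0 hs1) (sum_extendCompl s hn')
    _ ↔ _ := by
        simp only [Fin.forall_iff_castLE_and_last hn', t, extendCompl_castLE, extendCompl_last]
end

section
/- Let d ≥ 2 be even, g(s) = (3s−1)^{d−1} + 1, and h(s) = (1−s)g(s) − s·g(1−s). Then h admits the factorization h(s) = −9s(s−1)(2s−1)(3s−1)(3s−2)·Σ_{p,q ≥ 0, p+q ≤ d/2−3} (3s−1)^{2p}(3s−2)^{2q}. In particular, h is identically zero if d ∈ {2,4}, and for even d ≥ 6 the real zeros of h are exactly {0, 1/3, 1/2, 2/3, 1}. -/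
/-!
Put `x = (3s-1)²`, `y = (3s-2)²`. Summing `(x - y) Σ_{p+q=m} x^p y^q = x^{m+1} - y^{m+1}` over
`m ≤ n` and clearing two geometric sums gives
`(x-1)(y-1)(x-y) Σ_{p+q≤n} x^p y^q = (y-1)(x^{n+2}-x) - (x-1)(y^{n+2}-y)`.
Since `x - 1 = 3s(3s-2)`, `y - 1 = 3(s-1)(3s-1)`, `x - y = 3(2s-1)` and `3(1-s) - 1 = -(3s-2)`,
for `d = 2k+6` this is `-3 h(s)` with `n = k`. The double sum contains the term `1` and all its
terms are squares, so it is positive and the zeros of `h` are those of the quintic factor.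
-/

open Finset

section CommRing

variable {R : Type*} [CommRing R]

theorem sum_antidiagonal_pow_mul_pow_mul_sub (x y : R) (m : ℕ) :
    (∑ pq ∈ antidiagonal m, x ^ pq.1 * y ^ pq.2) * (x - y) = x ^ (m + 1) - y ^ (m + 1) := by
  rw [Nat.sum_antidiagonal_eq_sum_range_succ (fun p q => x ^ p * y ^ q), ← geom_sum₂_mul,
    Nat.add_sub_cancel]

theorem sub_one_mul_sub_one_mul_sub_mul_sum_antidiagonal (x y : R) (n : ℕ) :
    (x - 1) * (y - 1) * (x - y) *
        ∑ m ∈ range (n + 1), ∑ pq ∈ antidiagonal m, x ^ pq.1 * y ^ pq.2 =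
      (y - 1) * (x ^ (n + 2) - x) - (x - 1) * (y ^ (n + 2) - y) := by
  induction n with
  | zero =>
    simp only [zero_add, range_one, sum_singleton, HasAntidiagonal.antidiagonal_zero, pow_zero,
      mul_one]
    ring
  | succ n ih =>
    rw [sum_range_succ, mul_add, ih]
    linear_combination (x - 1) * (y - 1) * sum_antidiagonal_pow_mul_pow_mul_sub x y (n + 1)

end CommRing

theorem sum_filter_add_le_eq_sum_antidiagonal {M : Type*} [AddCommMonoid M] {N n : ℕ} (hn : n < N)
    (f : ℕ × ℕ → M) :
    ∑ pq ∈ (range N ×ˢ range N).filter (fun pq => pq.1 + pq.2 ≤ n), f pq =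
      ∑ m ∈ range (n + 1), ∑ pq ∈ antidiagonal m, f pq := by
  rw [← sum_fiberwise_of_maps_to (g := fun pq : ℕ × ℕ => pq.1 + pq.2) (t := range (n + 1))]
  · refine sum_congr rfl fun m hm => sum_congr ?_ fun _ _ => rfl
    ext ⟨p, q⟩
    simp only [mem_filter, mem_product, mem_range, HasAntidiagonal.mem_antidiagonal] at hm ⊢
    omega
  · intro pq hpq
    simp only [mem_filter, mem_range] at hpq ⊢
    omega

theorem sum_range_sum_antidiagonal_pow_two_mul_pos (a b : ℝ) (n : ℕ) :
    0 < ∑ m ∈ range (n + 1), ∑ pq ∈ antidiagonal m, a ^ (2 * pq.1) * b ^ (2 * pq.2) := by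
  have hnonneg : ∀ m, 0 ≤ ∑ pq ∈ antidiagonal m, a ^ (2 * pq.1) * b ^ (2 * pq.2) := fun m =>
    sum_nonneg fun pq _ => by simp only [pow_mul]; positivity
  rw [sum_range_succ']
  simp only [Nat.antidiagonal_zero, sum_singleton, mul_zero, pow_zero, mul_one]
  exact add_pos_of_nonneg_of_pos (sum_nonneg fun m _ => hnonneg _) one_pos

theorem odd_pow_reflection_factorization (k : ℕ) (s : ℝ) :
    (1 - s) * ((3 * s - 1) ^ (2 * k + 5) + 1) - s * ((3 * (1 - s) - 1) ^ (2 * k + 5) + 1) =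
      -9 * s * (s - 1) * (2 * s - 1) * (3 * s - 1) * (3 * s - 2) *
        ∑ m ∈ range (k + 1), ∑ pq ∈ antidiagonal m,
          (3 * s - 1) ^ (2 * pq.1) * (3 * s - 2) ^ (2 * pq.2) := by
  have key := sub_one_mul_sub_one_mul_sub_mul_sum_antidiagonal ((3 * s - 1) ^ 2) ((3 * s - 2) ^ 2) k
  simp only [← pow_mul] at key
  rw [show 3 * (1 - s) - 1 = -(3 * s - 2) by ring, Odd.neg_pow ⟨k + 2, by ring⟩]
  linear_combination (1 / 3 : ℝ) * key

theorem quintic_eq_zero_iff (s : ℝ) :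
    -9 * s * (s - 1) * (2 * s - 1) * (3 * s - 1) * (3 * s - 2) = 0 ↔
      s = 0 ∨ s = 1 / 3 ∨ s = 1 / 2 ∨ s = 2 / 3 ∨ s = 1 := by
  simp only [mul_eq_zero, sub_eq_zero, neg_eq_zero, OfNat.ofNat_ne_zero, false_or]
  grind

theorem stmt_14 (d : ℕ) (hd : 2 ≤ d) (hdeven : Even d)
    (g : ℝ → ℝ) (hg : ∀ s, g s = (3 * s - 1) ^ (d - 1) + 1)
    (h : ℝ → ℝ) (hh : ∀ s, h s = (1 - s) * g s - s * g (1 - s)) :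
    (∀ s : ℝ, h s =
      -9 * s * (s - 1) * (2 * s - 1) * (3 * s - 1) * (3 * s - 2) *
        ∑ pq ∈ (Finset.range d ×ˢ Finset.range d).filter
            (fun pq => (pq.1 : ℤ) + pq.2 ≤ (d : ℤ) / 2 - 3),
          (3 * s - 1) ^ (2 * pq.1) * (3 * s - 2) ^ (2 * pq.2)) ∧
    (d = 2 ∨ d = 4 → ∀ s, h s = 0) ∧
    (6 ≤ d → ∀ s : ℝ, h s = 0 ↔
      s = 0 ∨ s = 1 / 3 ∨ s = 1 / 2 ∨ s = 2 / 3 ∨ s = 1) := by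
  have hsmall : d = 2 ∨ d = 4 → ∀ s, h s = 0 := by
    rintro (rfl | rfl) s <;> rw [hh, hg, hg] <;> ring
  have hlarge : 6 ≤ d → ∃ k, (∀ s, h s =
      -9 * s * (s - 1) * (2 * s - 1) * (3 * s - 1) * (3 * s - 2) *
        ∑ m ∈ range (k + 1), ∑ pq ∈ antidiagonal m,
          (3 * s - 1) ^ (2 * pq.1) * (3 * s - 2) ^ (2 * pq.2)) ∧
      ∀ f : ℕ × ℕ → ℝ,
        ∑ pq ∈ (range d ×ˢ range d).filter (fun pq => (pq.1 : ℤ) + pq.2 ≤ (d : ℤ) / 2 - 3), f pq =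
          ∑ m ∈ range (k + 1), ∑ pq ∈ antidiagonal m, f pq := by
    intro hd6
    obtain ⟨k, rfl⟩ : ∃ k, d = 2 * k + 6 := by obtain ⟨r, rfl⟩ := hdeven; exact ⟨r - 3, by omega⟩
    refine ⟨k, fun s => ?_, fun f => ?_⟩
    · rw [hh, hg, hg, show 2 * k + 6 - 1 = 2 * k + 5 by omega]
      exact odd_pow_reflection_factorization k s
    · rw [← sum_filter_add_le_eq_sum_antidiagonal (by omega : k < 2 * k + 6)]
      exact sum_congr (filter_congr fun _ _ => by omega) fun _ _ => rfl
  refine ⟨fun s => ?_, hsmall, fun hd6 s => ?_⟩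
  · rcases le_or_gt 6 d with hd6 | hd6
    · obtain ⟨k, hk, hsum⟩ := hlarge hd6
      rw [hk, hsum]
    · have hfilter : (range d ×ˢ range d).filter
          (fun pq => (pq.1 : ℤ) + pq.2 ≤ (d : ℤ) / 2 - 3) = ∅ :=
        filter_eq_empty_iff.mpr fun _ _ => by omega
      rw [hsmall (by obtain ⟨r, rfl⟩ := hdeven; omega), hfilter, sum_empty, mul_zero]
  · obtain ⟨k, hk, -⟩ := hlarge hd6
    rw [hk, mul_eq_zero, or_iff_left (sum_range_sum_antidiagonal_pow_two_mul_pos _ _ k).ne',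
      quintic_eq_zero_iff]
end

section
/- Let d ≥ 3 be odd, g(s) = (3s−1)^{d−1} − 1, and h(s) = (1−s)g(s) − s·g(1−s). Then h(s) < 0 for 0 < s < 1/2 and h(s) > 0 for 1/2 < s < 1; in particular the only zeros of h in [0,1] are 0, 1/2, and 1. -/
/-!
Write `h s = (1 - s) * g s - s * g (1 - s)`. Since `d - 1` is even, `g` is strictly convex with
`g 0 = (-1) ^ (d - 1) - 1 = 0`, so its slope from the origin `g x / x` is strictly increasing.
For `0 < s < 1 / 2` we have `s < 1 - s`, hence `g s / s < g (1 - s) / (1 - s)`, i.e. `h s < 0`.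
The identity `h (1 - s) = - h s` transfers this to `1 / 2 < s < 1`, and `g 0 = 0` makes `0` and
`1` zeros of `h`.
-/

open Set

theorem StrictConvexOn.mul_lt_mul_of_map_zero {s : Set ℝ} {f : ℝ → ℝ}
    (hf : StrictConvexOn ℝ s f) (h0 : 0 ∈ s) (hf0 : f 0 = 0) {x y : ℝ} (hx : x ∈ s) (hy : y ∈ s)
    (hx0 : 0 < x) (hxy : x < y) : y * f x < x * f y := by
  have hslope := hf.secant_strict_mono h0 hx hy hx0.ne' (hx0.trans hxy).ne' hxy
  simp only [hf0, sub_zero] at hslope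
  rwa [div_lt_div_iff₀ hx0 (hx0.trans hxy), mul_comm (f x), mul_comm (f y)] at hslope

theorem StrictConvexOn.comp_mul_add_s15 {φ : ℝ → ℝ} (hφ : StrictConvexOn ℝ univ φ) {a : ℝ}
    (ha : a ≠ 0) (b : ℝ) : StrictConvexOn ℝ univ fun x ↦ φ (a * x + b) := by
  refine ⟨convex_univ, fun x _ y _ hxy s t hs ht hst ↦ ?_⟩
  have hcombo : a * (s • x + t • y) + b = s • (a * x + b) + t • (a * y + b) := by
    simp only [smul_eq_mul]
    linear_combination b * hst.symm
  have hne : a * x + b ≠ a * y + b := by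
    simpa only [ne_eq, add_left_inj, mul_right_inj' ha] using hxy
  simpa only [hcombo] using hφ.2 trivial trivial hne hs ht hst

noncomputable def reflectionDefect (g : ℝ → ℝ) (s : ℝ) : ℝ := (1 - s) * g s - s * g (1 - s)

namespace reflectionDefect

variable {g : ℝ → ℝ} {s : ℝ}

theorem one_sub (g : ℝ → ℝ) (s : ℝ) : reflectionDefect g (1 - s) = -reflectionDefect g s := by
  simp only [reflectionDefect, sub_sub_cancel]
  ring

section

variable (hg : StrictConvexOn ℝ (Icc 0 1) g) (hg0 : g 0 = 0)
include hg hg0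

theorem neg_of_lt_half (hs0 : 0 < s) (hs : s < 1 / 2) : reflectionDefect g s < 0 := by
  have hlt := hg.mul_lt_mul_of_map_zero (by simp) hg0 (x := s) (y := 1 - s)
    ⟨hs0.le, by linarith⟩ ⟨by linarith, by linarith⟩ hs0 (by linarith)
  unfold reflectionDefect
  linarith

theorem pos_of_half_lt (hs : 1 / 2 < s) (hs1 : s < 1) : 0 < reflectionDefect g s := by
  have hneg := neg_of_lt_half hg hg0 (s := 1 - s) (by linarith) (by linarith)
  rw [one_sub] at hneg
  linarith

theorem eq_zero_iff (hs0 : 0 ≤ s) (hs1 : s ≤ 1) :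
    reflectionDefect g s = 0 ↔ s = 0 ∨ s = 1 / 2 ∨ s = 1 := by
  constructor
  · intro hzero
    by_contra! hne
    obtain ⟨hne0, hne_half, hne1⟩ := hne
    rcases hne_half.lt_or_gt with hlt | hgt
    · exact (neg_of_lt_half hg hg0 (hs0.lt_of_ne' hne0) hlt).ne hzero
    · exact (pos_of_half_lt hg hg0 hgt (hs1.lt_of_ne hne1)).ne' hzero
  · rintro (rfl | rfl | rfl) <;> norm_num [reflectionDefect, hg0]

end

end reflectionDefect

theorem stmt_15 (d : ℕ) (hd : 3 ≤ d) (hdodd : Odd d)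
    (g : ℝ → ℝ) (hg : ∀ s, g s = (3 * s - 1) ^ (d - 1) - 1)
    (h : ℝ → ℝ) (hh : ∀ s, h s = (1 - s) * g s - s * g (1 - s)) :
    (∀ s : ℝ, 0 < s → s < 1 / 2 → h s < 0) ∧
    (∀ s : ℝ, 1 / 2 < s → s < 1 → 0 < h s) ∧
    (∀ s : ℝ, 0 ≤ s → s ≤ 1 → (h s = 0 ↔ s = 0 ∨ s = 1 / 2 ∨ s = 1)) := by
  have heven : Even (d - 1) := Nat.Odd.sub_odd hdodd odd_one
  have hconvex : StrictConvexOn ℝ (Icc 0 1) g := by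
    have hpow := ((heven.strictConvexOn_pow (by omega)).comp_mul_add_s15 three_ne_zero (-1)).add_const
      (-1 : ℝ)
    have hg_eq : g = (fun s ↦ (3 * s + -1) ^ (d - 1)) + fun _ ↦ -1 := by
      funext s
      simp only [hg, Pi.add_apply, sub_eq_add_neg]
    rw [hg_eq]
    exact hpow.subset (subset_univ _) (convex_Icc 0 1)
  have hg0 : g 0 = 0 := by simp [hg, heven.neg_one_pow]
  obtain rfl : h = reflectionDefect g := funext hh
  exact ⟨fun s ↦ reflectionDefect.neg_of_lt_half hconvex hg0,
    fun s ↦ reflectionDefect.pos_of_half_lt hconvex hg0,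
    fun s ↦ reflectionDefect.eq_zero_iff hconvex hg0⟩
end

section
/- Let n ≥ 2, d ≥ 3 odd, and let v_1,...,v_{n+1} be the simplex frame in ℝ^n. For any nonempty K ⊆ {1,...,n+1} with |K| ≤ n, ‖Σ_{k∈K} v_k‖² = |K|(n+1−|K|)/n, and the normalized vector v = (Σ_{k∈K} v_k)/‖Σ_{k∈K} v_k‖ is an eigenvector of T = Σ_{k=1}^{n+1} v_k^{⊗d} with eigenvalue μ = ((n+1−|K|)^{d−1} − |K|^{d−1}) / (n^{d/2}(|K|(n+1−|K|))^{d/2−1}). Moreover μ = 0 if and only if 2|K| = n+1; hence if n is even all eigenvalues of such eigenvectors are nonzero. -/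
open scoped RealInnerProductSpace BigOperators

/-! The simplex frame has Gram matrix `⟪v k, v j⟫ = (1 + 1/n) δ_kj - 1/n`, so `∑ k, v k = 0`,
and for `z = ∑ k ∈ K, v k` the inner product `⟪z, v j⟫` takes only two values: `(n + 1 - |K|)/n`
on `K` and `-|K|/n` off `K`. As `d - 1` is even, `T·z^{d-1}` is then a combination of
`∑ k ∈ K, v k = z` and `∑ k ∉ K, v k = -z`, i.e. a multiple of `z`. Normalizing `z` rescales the
eigenvalue by `‖z‖^{2-d}`, and it vanishes iff `(n + 1 - |K|)^{d-1} = |K|^{d-1}`, i.e. iff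
`n + 1 = 2|K|`. -/

def IsSimplexFrame {E : Type*} [NormedAddCommGroup E] [InnerProductSpace ℝ E] (n : ℕ)
    (v : Fin (n + 1) → E) : Prop :=
  ∀ k j, ⟪v k, v j⟫ = if k = j then 1 else -1 / (n : ℝ)

section SimplexVec

variable {n : ℕ}

local notation "𝟙" => (WithLp.toLp 2 (fun _ => (1 : ℝ)) : EuclideanSpace ℝ (Fin n))

lemma inner_ones_self : ⟪𝟙, 𝟙⟫ = (n : ℝ) := by
  simp [EuclideanSpace.norm_eq]

lemma inner_single_ones (i : Fin n) : ⟪EuclideanSpace.single i (1 : ℝ), 𝟙⟫ = 1 := by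
  simp [EuclideanSpace.inner_single_left]

lemma inner_ones_single (i : Fin n) : ⟪𝟙, EuclideanSpace.single i (1 : ℝ)⟫ = 1 := by
  simp [EuclideanSpace.inner_single_right]

lemma inner_single_single (i j : Fin n) :
    ⟪EuclideanSpace.single i (1 : ℝ), EuclideanSpace.single j (1 : ℝ)⟫
      = if i = j then 1 else 0 := by
  simp [EuclideanSpace.inner_single_left, PiLp.single_apply]

lemma simplexVec_castSucc (i : Fin n) :
    simplexVec n i.castSucc = Real.sqrt (1 + 1 / n) • EuclideanSpace.single i 1
      - ((Real.sqrt (n + 1) - 1) / (n : ℝ) ^ ((3 : ℝ) / 2)) • 𝟙 := by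
  simp [simplexVec]

lemma simplexVec_last : simplexVec n (Fin.last n) = -(1 / Real.sqrt n) • 𝟙 := by
  simp [simplexVec]

lemma isSimplexFrame_of_eq {v : Fin (n + 1) → EuclideanSpace ℝ (Fin n)} {a b c : ℝ}
    (hcast : ∀ i, v i.castSucc = a • EuclideanSpace.single i 1 - b • 𝟙)
    (hlast : v (Fin.last n) = -c • 𝟙)
    (ha : a ^ 2 = 1 + 1 / n) (hab : n * b ^ 2 - 2 * a * b = -1 / n)
    (hac : c * (a - n * b) = 1 / n) (hc : n * c ^ 2 = 1) :
    IsSimplexFrame n v := by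
  intro k j
  induction k using Fin.lastCases <;> induction j using Fin.lastCases
  all_goals simp only [hlast, hcast, inner_sub_left, inner_sub_right, real_inner_smul_left,
    real_inner_smul_right, inner_ones_self, inner_single_ones, inner_ones_single,
    inner_single_single, Fin.castSucc_inj, Fin.castSucc_ne_last, (Fin.castSucc_ne_last _).symm,
    if_true, if_false]
  · linear_combination hc
  · linear_combination -hac
  · linear_combination -hac
  · split_ifs
    · linear_combination ha + hab
    · linear_combination hab

theorem isSimplexFrame_simplexVec (hn : n ≠ 0) : IsSimplexFrame n (simplexVec n) := by
  have hn : (0 : ℝ) < n := by positivity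
  have hs : Real.sqrt n ^ 2 = n := Real.sq_sqrt hn.le
  have ht : Real.sqrt (n + 1) ^ 2 = n + 1 := Real.sq_sqrt (by positivity)
  have ha : Real.sqrt (1 + 1 / n) = Real.sqrt (n + 1) / Real.sqrt n := by
    rw [← Real.sqrt_div (by positivity), add_div, div_self hn.ne']
  have hb : (n : ℝ) ^ ((3 : ℝ) / 2) = n * Real.sqrt n := by
    rw [show (3 : ℝ) / 2 = 1 + 1 / 2 by norm_num, Real.rpow_add hn, Real.rpow_one,
      ← Real.sqrt_eq_rpow]
  refine isSimplexFrame_of_eq simplexVec_castSucc simplexVec_last ?_ ?_ ?_ ?_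
  · exact Real.sq_sqrt (by positivity)
  · rw [ha, hb]; field_simp; linarith
  · rw [ha, hb]; field_simp; linarith
  · rw [div_pow, hs]; field_simp

end SimplexVec

lemma sum_inner_smul_pow_smul {ι E : Type*} [Fintype ι] [NormedAddCommGroup E]
    [InnerProductSpace ℝ E] (v : ι → E) (c : ℝ) (z : E) (p : ℕ) :
    ∑ j, ⟪c • z, v j⟫ ^ p • v j = c ^ p • ∑ j, ⟪z, v j⟫ ^ p • v j := by
  simp only [Finset.smul_sum, real_inner_smul_left, mul_pow, mul_smul]

namespace IsSimplexFrame

open Finset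

variable {E : Type*} [NormedAddCommGroup E] [InnerProductSpace ℝ E] {n : ℕ} {v : Fin (n + 1) → E}

lemma sum_inner (hv : IsSimplexFrame n v) (hn : n ≠ 0) (K : Finset (Fin (n + 1)))
    (j : Fin (n + 1)) :
    ⟪∑ k ∈ K, v k, v j⟫ = if j ∈ K then ((n : ℝ) + 1 - #K) / n else -(#K / n) := by
  have hv' (k : Fin (n + 1)) : ⟪v k, v j⟫ = -1 / n + if k = j then (1 : ℝ) + 1 / n else 0 := by
    rw [hv]; split_ifs <;> ring
  rw [_root_.sum_inner, sum_congr rfl fun k _ => hv' k, sum_add_distrib, sum_const, sum_ite_eq',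
    nsmul_eq_mul]
  split_ifs <;> field_simp <;> ring

lemma norm_sum_sq (hv : IsSimplexFrame n v) (hn : n ≠ 0) (K : Finset (Fin (n + 1))) :
    ‖∑ k ∈ K, v k‖ ^ 2 = #K * ((n : ℝ) + 1 - #K) / n := by
  rw [← real_inner_self_eq_norm_sq, inner_sum,
    sum_congr rfl fun j hj => by rw [hv.sum_inner hn, if_pos hj], sum_const, nsmul_eq_mul,
    mul_div_assoc]

lemma sum_eq_zero (hv : IsSimplexFrame n v) (hn : n ≠ 0) : ∑ k, v k = 0 := by
  have := hv.norm_sum_sq hn univ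
  rw [card_univ, Fintype.card_fin, Nat.cast_succ, sub_self, mul_zero, zero_div, sq_eq_zero_iff,
    norm_eq_zero] at this
  exact this

lemma sum_compl (hv : IsSimplexFrame n v) (hn : n ≠ 0) (K : Finset (Fin (n + 1))) :
    ∑ k ∈ Kᶜ, v k = -∑ k ∈ K, v k :=
  eq_neg_of_add_eq_zero_right <| (sum_add_sum_compl K v).trans (hv.sum_eq_zero hn)

lemma sum_inner_pow_smul (hv : IsSimplexFrame n v) (hn : n ≠ 0) {p : ℕ} (hp : Even p)
    (K : Finset (Fin (n + 1))) :
    ∑ j, ⟪∑ k ∈ K, v k, v j⟫ ^ p • v j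
      = ((((n : ℝ) + 1 - #K) / n) ^ p - (#K / n) ^ p) • ∑ k ∈ K, v k := by
  rw [← sum_add_sum_compl K, sub_smul, sub_eq_add_neg, ← smul_neg, ← hv.sum_compl hn, smul_sum,
    smul_sum]
  congr 1 <;> refine sum_congr rfl fun j hj => ?_
  · rw [hv.sum_inner hn, if_pos hj]
  · rw [hv.sum_inner hn, if_neg (mem_compl.1 hj), hp.neg_pow]

end IsSimplexFrame

lemma pow_eq_rpow_half_of_sq_eq {r s : ℝ} (hr : 0 ≤ r) (hs : r ^ 2 = s) (k : ℕ) :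
    r ^ k = s ^ ((k : ℝ) / 2) := by
  rw [← hs, ← Real.rpow_natCast r 2, ← Real.rpow_mul hr, ← Real.rpow_natCast]
  congr 1; push_cast; ring

lemma inv_pow_mul_sub_pow_div_eq {A B n r : ℝ} (hn : 0 < n) (hr : 0 ≤ r)
    (hr2 : r ^ 2 = B * A / n) {d : ℕ} (hd : 2 ≤ d) :
    r⁻¹ ^ (d - 1) * ((A / n) ^ (d - 1) - (B / n) ^ (d - 1))
      = (A ^ (d - 1) - B ^ (d - 1)) / (n ^ ((d : ℝ) / 2) * (B * A) ^ ((d : ℝ) / 2 - 1)) * r⁻¹ := by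
  have hAB : 0 ≤ B * A := by
    rw [show B * A = r ^ 2 * n by rw [hr2]; field_simp]
    positivity
  have hrd : r ^ (d - 2) = (B * A) ^ ((d : ℝ) / 2 - 1) / n ^ ((d : ℝ) / 2 - 1) := by
    rw [pow_eq_rpow_half_of_sq_eq hr hr2, Real.div_rpow hAB hn.le, Nat.cast_sub hd]
    push_cast; ring_nf
  have hnd : n ^ (d - 1) = n ^ ((d : ℝ) / 2) * n ^ ((d : ℝ) / 2 - 1) := by
    rw [← Real.rpow_add hn, ← Real.rpow_natCast, Nat.cast_sub (by omega)]
    push_cast; ring_nf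
  have hr1 : r ^ (d - 1) = r ^ (d - 2) * r := by rw [← pow_succ]; congr 1; omega
  rw [inv_pow, hr1, hrd, div_pow, div_pow, hnd]
  field_simp

theorem stmt_16 (n d : ℕ) (hn : 2 ≤ n) (hd : 3 ≤ d) (hdodd : Odd d)
    (K : Finset (Fin (n + 1))) (hK : K.Nonempty) (hKcard : K.card ≤ n)
    (z : EuclideanSpace ℝ (Fin n)) (hz : z = ∑ k ∈ K, simplexVec n k)
    (μ : ℝ)
    (hμ : μ = (((n : ℝ) + 1 - K.card) ^ (d - 1) - (K.card : ℝ) ^ (d - 1)) /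
        ((n : ℝ) ^ ((d : ℝ) / 2) *
          ((K.card : ℝ) * ((n : ℝ) + 1 - K.card)) ^ ((d : ℝ) / 2 - 1))) :
    ‖z‖ ^ 2 = (K.card : ℝ) * ((n : ℝ) + 1 - K.card) / n ∧
    (∑ j : Fin (n + 1), ⟪‖z‖⁻¹ • z, simplexVec n j⟫ ^ (d - 1) • simplexVec n j
        = μ • (‖z‖⁻¹ • z)) ∧
    (μ = 0 ↔ 2 * K.card = n + 1) ∧
    (Even n → μ ≠ 0) := by
  have hn0 : n ≠ 0 := by omega
  have hv := isSimplexFrame_simplexVec hn0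
  have hB : (0 : ℝ) < K.card := by exact_mod_cast hK.card_pos
  have hA : (0 : ℝ) < n + 1 - K.card := by
    have : (K.card : ℝ) ≤ n := by exact_mod_cast hKcard
    linarith
  have hnorm : ‖z‖ ^ 2 = (K.card : ℝ) * ((n : ℝ) + 1 - K.card) / n := hz ▸ hv.norm_sum_sq hn0 K
  have hiff : μ = 0 ↔ 2 * K.card = n + 1 := by
    rw [hμ, div_eq_zero_iff, or_iff_left (by positivity), sub_eq_zero,
      pow_left_inj₀ hA.le hB.le (by omega), sub_eq_iff_eq_add]
    norm_cast
    omega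
  refine ⟨hnorm, ?_, hiff, fun ⟨r, hr⟩ hμ0 => by have := hiff.1 hμ0; omega⟩
  rw [sum_inner_smul_pow_smul, hz, hv.sum_inner_pow_smul hn0 (Nat.Odd.sub_odd hdodd odd_one) K,
    ← hz, smul_smul, inv_pow_mul_sub_pow_div_eq (by positivity) (norm_nonneg z) hnorm (by omega),
    ← hμ, mul_smul]
end

section
/- Let d ∈ {2,4}, n = 2, and T = Σ_{k=1}^3 v_k^{⊗d} with v_1, v_2, v_3 the simplex frame in ℝ² (unit vectors with pairwise inner products −1/2, summing to zero). Then every unit vector v ∈ ℝ² is an eigenvector of T, with eigenvalue μ = 3/2 if d = 2 and μ = 9/8 if d = 4. -/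
open scoped RealInnerProductSpace
open Finset Module

/-!
The frame operator `x ↦ ∑ ⟪x, v k⟫ v k` of the simplex frame is `3/2` times the identity: it acts
so on each `v j` (because `∑ v k = 0`), and `v 0, v 1` span the plane. Hence the numbers
`a k = ⟪x, v k⟫` satisfy `∑ a k = 0` and `∑ a k ^ 2 = 3/2 ‖x‖²`, so by Vieta each is a root of
`t³ - 3/4 ‖x‖² t - a 0 a 1 a 2`. Thus `∑ a k ³ v k = 3/4 ‖x‖² ∑ a k v k + a 0 a 1 a 2 ∑ v k`,
which is `9/8 ‖x‖² x`.
-/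

structure IsSimplexFrame_s17 {E : Type*} [NormedAddCommGroup E] [InnerProductSpace ℝ E]
    (v : Fin 3 → E) : Prop where
  norm_eq_one : ∀ k, ‖v k‖ = 1
  inner_eq : ∀ j k, j ≠ k → ⟪v j, v k⟫ = -(1 / 2)
  sum_eq_zero : ∑ k, v k = 0

theorem two_mul_pow_three_eq_of_sum_eq_zero {R : Type*} [CommRing R] {a : Fin 3 → R}
    (ha : ∑ i, a i = 0) (k : Fin 3) :
    2 * a k ^ 3 = (∑ i, a i ^ 2) * a k + 2 * ∏ i, a i := by
  have h2 : a 2 = -(a 0 + a 1) := by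
    rw [Fin.sum_univ_three] at ha
    linear_combination ha
  simp only [Fin.sum_univ_three, Fin.prod_univ_three, h2]
  fin_cases k <;> simp only [Fin.zero_eta, Fin.mk_one, Fin.reduceFinMk, h2] <;> ring

namespace IsSimplexFrame_s17

variable {E : Type*} [NormedAddCommGroup E] [InnerProductSpace ℝ E] {v : Fin 3 → E}

theorem inner_self (hv : IsSimplexFrame_s17 v) (k : Fin 3) : ⟪v k, v k⟫ = 1 := by
  rw [real_inner_self_eq_norm_sq, hv.norm_eq_one, one_pow]

theorem sum_inner_smul_self (hv : IsSimplexFrame_s17 v) (j : Fin 3) :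
    ∑ k, ⟪v j, v k⟫ • v k = (3 / 2 : ℝ) • v j := by
  have hrest : ∑ k ∈ univ.erase j, v k = -v j := by
    rw [eq_neg_iff_add_eq_zero, add_comm, add_sum_erase _ _ (mem_univ j), hv.sum_eq_zero]
  rw [← add_sum_erase _ _ (mem_univ j), hv.inner_self,
    sum_congr rfl fun k hk => by rw [hv.inner_eq j k (ne_of_mem_erase hk).symm], ← smul_sum, hrest]
  module

theorem linearIndependent_pair (hv : IsSimplexFrame_s17 v) : LinearIndependent ℝ ![v 0, v 1] := by
  rw [LinearIndependent.pair_iff]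
  intro s t hst
  have h0 := congrArg (⟪·, v 0⟫) hst
  have h1 := congrArg (⟪·, v 1⟫) hst
  simp only [inner_add_left, real_inner_smul_left, hv.inner_self, inner_zero_left,
    hv.inner_eq 0 1 (by decide), hv.inner_eq 1 0 (by decide)] at h0 h1
  constructor <;> linarith

theorem sum_inner_smul (hv : IsSimplexFrame_s17 v) (hE : finrank ℝ E = 2) (x : E) :
    ∑ k, ⟪x, v k⟫ • v k = (3 / 2 : ℝ) • x := by
  have : FiniteDimensional ℝ E := .of_finrank_eq_succ hE
  have hspan := hv.linearIndependent_pair.span_eq_top_of_card_eq_finrank' (by simp [hE])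
  obtain ⟨α, β, rfl⟩ : ∃ α β : ℝ, α • v 0 + β • v 1 = x := by
    rw [← Submodule.mem_span_pair, ← Matrix.range_cons_cons_empty, hspan]
    trivial
  simp only [inner_add_left, real_inner_smul_left, add_smul, mul_smul, sum_add_distrib,
    ← smul_sum, hv.sum_inner_smul_self, smul_add, smul_comm (3 / 2 : ℝ)]

theorem sum_inner_sq (hv : IsSimplexFrame_s17 v) (hE : finrank ℝ E = 2) (x : E) :
    ∑ k, ⟪x, v k⟫ ^ 2 = 3 / 2 * ‖x‖ ^ 2 := by
  have h := congrArg (⟪x, ·⟫) (hv.sum_inner_smul hE x)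
  simpa only [inner_sum, real_inner_smul_right, ← sq, real_inner_self_eq_norm_sq] using h

theorem sum_inner_s17 (hv : IsSimplexFrame_s17 v) (x : E) : ∑ k, ⟪x, v k⟫ = 0 := by
  rw [← inner_sum, hv.sum_eq_zero, inner_zero_right]

theorem sum_inner_pow_three_smul (hv : IsSimplexFrame_s17 v) (hE : finrank ℝ E = 2) (x : E) :
    ∑ k, ⟪x, v k⟫ ^ 3 • v k = (9 / 8 * ‖x‖ ^ 2) • x := by
  have hcube (k : Fin 3) : ⟪x, v k⟫ ^ 3 = 3 / 4 * ‖x‖ ^ 2 * ⟪x, v k⟫ + ∏ i, ⟪x, v i⟫ := by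
    have := two_mul_pow_three_eq_of_sum_eq_zero (hv.sum_inner_s17 x) k
    rw [hv.sum_inner_sq hE] at this
    linear_combination this / 2
  simp_rw [hcube, add_smul, sum_add_distrib, mul_smul, ← smul_sum, hv.sum_inner_smul hE,
    hv.sum_eq_zero, smul_zero, add_zero, smul_smul]
  congr 1
  ring

end IsSimplexFrame_s17

theorem stmt_17 (d : ℕ) (hd : d = 2 ∨ d = 4)
    (v : Fin 3 → EuclideanSpace ℝ (Fin 2))
    (hnorm : ∀ k, ‖v k‖ = 1)
    (hinner : ∀ j k, j ≠ k → ⟪v j, v k⟫ = -(1 / 2))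
    (hsum : ∑ k, v k = 0)
    (x : EuclideanSpace ℝ (Fin 2)) (hx : ‖x‖ = 1) :
    ∑ k, ⟪x, v k⟫ ^ (d - 1) • v k = (if d = 2 then (3 / 2 : ℝ) else 9 / 8) • x := by
  have hv : IsSimplexFrame_s17 v := ⟨hnorm, hinner, hsum⟩
  have hE := finrank_euclideanSpace_fin (𝕜 := ℝ) (n := 2)
  rcases hd with rfl | rfl
  · simpa using hv.sum_inner_smul hE x
  · simpa [hx] using hv.sum_inner_pow_three_smul hE x
end

section
/- Let d ≥ 3 be odd, n = 2, T = Σ_{k=1}^3 v_k^{⊗d} the regular simplex tensor in ℝ², and let x = ±v_k be a normalized eigenvector with eigenvalue μ = ±(1 − 2^{1−d}). Then the Jacobian of the tensor power map φ(x) = T·x^{d−1}/‖T·x^{d−1}‖ at x, given by φ'(x) = ((d−1)/|μ|)(I − xxᵀ)(T·x^{d−2}), has spectral radius 3(d−1)/(2^{d−1} − 1). In particular x is a repelling fixed point for d = 3 (spectral radius > 1) and attractive for odd d ≥ 5 (spectral radius < 1). -/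
/-!
Since `x = ±v_k` is a unit vector, `det (1 - x xᵀ) = 0`, so `J` is a singular `2 × 2` matrix and
its spectrum is `{0, tr J}`. The trace is computed from `tr ((1 - x xᵀ) v vᵀ) = 1 - ⟨x, v⟩²`:
the term `j = k` vanishes and the two others have `⟨x, v_j⟩ = ∓1/2`, so
`|tr J| = (d - 1) / (1 - 2^(1-d)) · 2 · 2^(2-d) · 3/4 = 3 (d - 1) / (2^(d-1) - 1)`.
-/

open Matrix

namespace Matrix

theorem spectrum_fin_two_of_det_eq_zero {K : Type*} [Field K] (A : Matrix (Fin 2) (Fin 2) K)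
    (h : A.det = 0) : spectrum K A = {0, A.trace} := by
  ext c
  rw [mem_spectrum_iff_isRoot_charpoly, charpoly_fin_two, h]
  simp only [Polynomial.IsRoot, Polynomial.eval_add, Polynomial.eval_sub, Polynomial.eval_pow,
    Polynomial.eval_mul, Polynomial.eval_C, Polynomial.eval_X, add_zero, Set.mem_insert_iff,
    Set.mem_singleton_iff]
  rw [sq, ← sub_mul, mul_eq_zero, sub_eq_zero, or_comm]

variable {n R : Type*} [Fintype n] [DecidableEq n] [CommRing R]

theorem det_one_sub_vecMulVec_self {x : n → R} (hx : x ⬝ᵥ x = 1) :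
    det (1 - vecMulVec x x) = 0 := by
  rw [sub_eq_add_neg, ← neg_vecMulVec, vecMulVec_eq Unit,
    det_one_add_replicateCol_mul_replicateRow, dotProduct_neg, hx, add_neg_cancel]

theorem trace_one_sub_vecMulVec_mul_vecMulVec (x v : n → R) :
    trace ((1 - vecMulVec x x) * vecMulVec v v) = v ⬝ᵥ v - (x ⬝ᵥ v) ^ 2 := by
  rw [Matrix.sub_mul, Matrix.one_mul, vecMulVec_mul_vecMulVec, trace_sub, trace_vecMulVec,
    trace_vecMulVec, dotProduct_smul, smul_eq_mul, sq]

theorem trace_one_sub_vecMulVec_mul_sum {ι : Type*} [Fintype ι] (x : n → R) (a : ι → R)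
    (v : ι → n → R) :
    trace ((1 - vecMulVec x x) * ∑ k, a k • vecMulVec (v k) (v k)) =
      ∑ k, a k * (v k ⬝ᵥ v k - (x ⬝ᵥ v k) ^ 2) := by
  simp only [Matrix.mul_sum, Matrix.mul_smul, trace_sum, trace_smul,
    trace_one_sub_vecMulVec_mul_vecMulVec, smul_eq_mul]

end Matrix

section Simplex

variable {m : Type*} [Fintype m] {v : Fin 3 → m → ℝ}

theorem sum_comp_dotProduct_of_simplex (hnorm : ∀ k, v k ⬝ᵥ v k = 1)
    (hinner : ∀ j k, j ≠ k → v j ⬝ᵥ v k = -(1 / 2)) (f : ℝ → ℝ) (k : Fin 3) :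
    ∑ j, f (v k ⬝ᵥ v j) = f 1 + 2 * f (-(1 / 2)) := by
  classical
  have hcompl : ∑ j ∈ {k}ᶜ, f (v k ⬝ᵥ v j) = ∑ _j ∈ ({k}ᶜ : Finset (Fin 3)), f (-(1 / 2)) :=
    Finset.sum_congr rfl fun j hj => by rw [hinner k j (Ne.symm (by simpa using hj))]
  rw [Fintype.sum_eq_add_sum_compl k, hnorm, hcompl, Finset.sum_const, Finset.card_compl]
  simp

variable [DecidableEq m]

theorem trace_one_sub_vecMulVec_mul_sum_of_simplex (hnorm : ∀ k, v k ⬝ᵥ v k = 1)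
    (hinner : ∀ j k, j ≠ k → v j ⬝ᵥ v k = -(1 / 2)) {ε : ℝ} (hε : ε ^ 2 = 1) (k : Fin 3)
    (p : ℕ) :
    trace ((1 - vecMulVec (ε • v k) (ε • v k)) *
        ∑ j, (ε • v k ⬝ᵥ v j) ^ p • vecMulVec (v j) (v j)) =
      2 * (ε * -(1 / 2)) ^ p * (1 - (ε * -(1 / 2)) ^ 2) := by
  rw [trace_one_sub_vecMulVec_mul_sum]
  simp only [hnorm, smul_dotProduct, smul_eq_mul]
  rw [sum_comp_dotProduct_of_simplex hnorm hinner (fun t => (ε * t) ^ p * (1 - (ε * t) ^ 2)) k,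
    mul_one, hε, sub_self, mul_zero, zero_add]
  ring

end Simplex

theorem sub_one_div_abs_one_sub_two_zpow_mul (d : ℕ) (hd : 2 ≤ d) :
    ((d : ℝ) - 1) / |1 - (2 : ℝ) ^ (1 - (d : ℤ))| * (2 * (1 / 2) ^ (d - 2) * (3 / 4)) =
      3 * ((d : ℝ) - 1) / (2 ^ (d - 1) - 1) := by
  obtain ⟨n, rfl⟩ := Nat.exists_eq_add_of_le' hd
  have hexp : (1 : ℤ) - ((n + 2 : ℕ) : ℤ) = -((n + 1 : ℕ) : ℤ) := by push_cast; ring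
  have hpow : (1 : ℝ) < 2 ^ (n + 1) := one_lt_pow₀ (by norm_num) (by omega)
  rw [hexp, _root_.zpow_neg, zpow_natCast, abs_of_pos (sub_pos.mpr (inv_lt_one_of_one_lt₀ hpow)),
    Nat.add_sub_cancel, show n + 2 - 1 = n + 1 by omega]
  push_cast
  rw [one_div, inv_pow]
  field_simp
  ring

theorem three_mul_le_two_pow_pred {d : ℕ} (hd : 5 ≤ d) : 3 * d ≤ 2 ^ (d - 1) := by
  induction d, hd using Nat.le_induction with
  | base => norm_num
  | succ n hn ih =>
    rw [Nat.add_sub_cancel, ← Nat.sub_add_cancel (by omega : 1 ≤ n), pow_succ]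
    omega

theorem stmt_19_general (d : ℕ) (hd : 3 ≤ d)
    (v : Fin 3 → Fin 2 → ℝ)
    (hnorm : ∀ k, v k ⬝ᵥ v k = 1)
    (hinner : ∀ j k, j ≠ k → v j ⬝ᵥ v k = -(1 / 2))
    (x : Fin 2 → ℝ) (μ : ℝ)
    (hx : ∃ k, (x = v k ∧ μ = 1 - (2 : ℝ) ^ (1 - (d : ℤ))) ∨
        (x = -v k ∧ μ = -(1 - (2 : ℝ) ^ (1 - (d : ℤ)))))
    (M J : Matrix (Fin 2) (Fin 2) ℝ)
    (hM : M = ∑ k, (x ⬝ᵥ v k) ^ (d - 2) • vecMulVec (v k) (v k))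
    (hJ : J = (((d : ℝ) - 1) / |μ|) • ((1 - vecMulVec x x) * M)) :
    IsGreatest {r : ℝ | ∃ c ∈ spectrum ℝ J, |c| = r}
      (3 * ((d : ℝ) - 1) / (2 ^ (d - 1) - 1)) ∧
    (d = 3 → 1 < 3 * ((d : ℝ) - 1) / ((2 : ℝ) ^ (d - 1) - 1)) ∧
    (5 ≤ d → 3 * ((d : ℝ) - 1) / ((2 : ℝ) ^ (d - 1) - 1) < 1) := by
  obtain ⟨k, ε, hε, rfl, hμ⟩ : ∃ k, ∃ ε : ℝ, (ε = 1 ∨ ε = -1) ∧ x = ε • v k ∧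
      |μ| = |1 - (2 : ℝ) ^ (1 - (d : ℤ))| := by
    obtain ⟨k, ⟨rfl, rfl⟩ | ⟨rfl, rfl⟩⟩ := hx
    · exact ⟨k, 1, .inl rfl, (one_smul ℝ _).symm, rfl⟩
    · exact ⟨k, -1, .inr rfl, (neg_one_smul ℝ _).symm, abs_neg _⟩
  have hε2 : ε ^ 2 = 1 := sq_eq_one_iff.mpr hε
  have hunit : ε • v k ⬝ᵥ ε • v k = 1 := by
    rw [smul_dotProduct, dotProduct_smul, hnorm, smul_eq_mul, smul_eq_mul, mul_one, ← sq, hε2]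
  have hdet : J.det = 0 := by
    rw [hJ, det_smul, det_mul, det_one_sub_vecMulVec_self hunit, zero_mul, mul_zero]
  have hhalf : |ε * -(1 / 2)| = 1 / 2 := by rcases hε with rfl | rfl <;> norm_num
  have hradius : |J.trace| = 3 * ((d : ℝ) - 1) / (2 ^ (d - 1) - 1) := by
    have hd1 : (0 : ℝ) ≤ d - 1 := sub_nonneg.mpr (by exact_mod_cast (by omega : 1 ≤ d))
    rw [hJ, hM, trace_smul, trace_one_sub_vecMulVec_mul_sum_of_simplex hnorm hinner hε2,
      smul_eq_mul, ← sub_one_div_abs_one_sub_two_zpow_mul d (by omega), ← hμ, abs_mul,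
      abs_of_nonneg (div_nonneg hd1 (abs_nonneg μ)), abs_mul, abs_mul, abs_pow, hhalf, ← sq_abs,
      hhalf]
    norm_num
  refine ⟨?_, fun h => by subst h; norm_num, fun h => ?_⟩
  · rw [spectrum_fin_two_of_det_eq_zero J hdet, ← hradius]
    refine ⟨⟨J.trace, by simp, rfl⟩, ?_⟩
    rintro r ⟨c, hc | hc, rfl⟩ <;> subst hc <;> simp
  · have hd3 : (3 : ℝ) ≤ d := by exact_mod_cast hd
    have hd5 : (3 : ℝ) * d ≤ 2 ^ (d - 1) := by exact_mod_cast three_mul_le_two_pow_pred h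
    rw [div_lt_one (by linarith)]
    linarith

theorem stmt_19 (d : ℕ) (hd : 3 ≤ d) (hdodd : Odd d)
    (v : Fin 3 → Fin 2 → ℝ)
    (hnorm : ∀ k, v k ⬝ᵥ v k = 1)
    (hinner : ∀ j k, j ≠ k → v j ⬝ᵥ v k = -(1 / 2))
    (x : Fin 2 → ℝ) (μ : ℝ)
    (hx : ∃ k, (x = v k ∧ μ = 1 - (2 : ℝ) ^ (1 - (d : ℤ))) ∨
        (x = -v k ∧ μ = -(1 - (2 : ℝ) ^ (1 - (d : ℤ)))))
    (M J : Matrix (Fin 2) (Fin 2) ℝ)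
    (hM : M = ∑ k, (x ⬝ᵥ v k) ^ (d - 2) • vecMulVec (v k) (v k))
    (hJ : J = (((d : ℝ) - 1) / |μ|) • ((1 - vecMulVec x x) * M)) :
    IsGreatest {r : ℝ | ∃ c ∈ spectrum ℝ J, |c| = r}
      (3 * ((d : ℝ) - 1) / (2 ^ (d - 1) - 1)) ∧
    (d = 3 → 1 < 3 * ((d : ℝ) - 1) / ((2 : ℝ) ^ (d - 1) - 1)) ∧
    (5 ≤ d → 3 * ((d : ℝ) - 1) / ((2 : ℝ) ^ (d - 1) - 1) < 1) :=
  stmt_19_general d hd v hnorm hinner x μ hx M J hM hJ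
end
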